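/- arXiv:1809.07982 — 8 statements merged into one kernel-verified Lean document; each statement's English description precedes it below -/
import Mathlib

section
/- Let p be a prime with p ≡ 1 (mod 4), t, b positive integers with t² + 4 = b²p, and 𝓕 the associated Lucas sequence. Then the period of the sequence 𝓕 modulo p² divides p²(p − 1); that is, for all integers m and n with m ≡ n (mod p²(p − 1)), one has 𝓕_m ≡ 𝓕_n (mod p²). -/
/-! In `ZMod (p ^ 2)` put `u = t / 2` and `v = u ^ 2 + 1 = b ^ 2 p / 4`, so that `v ^ 2 = 0`
and `p v = 0`. Because `v` is nilpotent, the Binet formula collapses to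
`u 𝓕ₙ = uⁿ (n - C(n, 3) v)`. Moreover `u ^ 4 = (v - 1) ^ 2 = 1 - 2v`, hence
`u ^ (4p) = 1 - 2pv = 1`. For `P = p²(p - 1)`, a multiple of `4p` as `p ≡ 1 (mod 4)`, `p²`
divides `P`, `C(P, 2)` and `C(P, 3)` (as `p > 3`), so the closed form gives `𝓕_P = 0` and
`𝓕_{P+1} = 1`; two consecutive values determine a solution of the recurrence, so `P` is a
period. -/

theorem Nat.dvd_choose_of_dvd_of_coprime {m n k : ℕ} (hmk : m.Coprime k) (hmn : m ∣ n) :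
    m ∣ n.choose k := by
  rcases n with _ | n <;> rcases k with _ | k
  · simpa using hmk
  · simp
  · simpa using hmk
  · refine hmk.dvd_of_dvd_mul_right ?_
    rw [← Nat.add_one_mul_choose_eq]
    exact hmn.mul_right _

theorem one_add_pow_of_sq_eq_zero {R : Type*} [CommSemiring R] {x : R} (hx : x ^ 2 = 0)
    (n : ℕ) : (1 + x) ^ n = 1 + n * x := by
  induction n with
  | zero => simp
  | succ n ih =>
    calc (1 + x) ^ (n + 1) = 1 + (n + 1) * x + n * x ^ 2 := by rw [pow_succ, ih]; ring
      _ = 1 + (n + 1 : ℕ) * x := by rw [hx, mul_zero, add_zero, Nat.cast_succ]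

section TwoTermRecurrence

variable {R : Type*} [CommRing R] {c : R} {f : ℤ → R}

theorem eq_zero_of_two_term_recurrence (hrec : ∀ k, f (k + 2) = c * f (k + 1) + f k)
    (h0 : f 0 = 0) (h1 : f 1 = 0) (k : ℤ) : f k = 0 := by
  suffices ∀ k, f k = 0 ∧ f (k + 1) = 0 from (this k).1
  intro k
  induction k using Int.induction_on with
  | zero => simpa using ⟨h0, h1⟩
  | succ i ih => exact ⟨ih.2, by rw [add_assoc, one_add_one_eq_two, hrec, ih.1, ih.2]; ring⟩
  | pred i ih =>
    refine ⟨?_, by simpa using ih.1⟩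
    have := hrec (-i - 1)
    rw [show -(i : ℤ) - 1 + 2 = -i + 1 by ring, show -(i : ℤ) - 1 + 1 = -i by ring,
      ih.1, ih.2] at this
    linear_combination -this

theorem periodic_of_two_term_recurrence (hrec : ∀ k, f (k + 2) = c * f (k + 1) + f k) {P : ℤ}
    (h0 : f P = f 0) (h1 : f (P + 1) = f 1) : Function.Periodic f P := by
  intro k
  rw [← sub_eq_zero]
  refine eq_zero_of_two_term_recurrence (f := fun k => f (k + P) - f k) (c := c) (fun k => ?_)
    (by simp [h0]) (by simp [add_comm, h1]) k
  rw [show k + 2 + P = k + P + 2 by ring, show k + 1 + P = k + P + 1 by ring, hrec, hrec]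
  ring

end TwoTermRecurrence

section NilpotentBinet

variable {R : Type*} [CommRing R] {u v : R}

theorem cast_choose_three_add_two (n : ℕ) :
    ((n + 2).choose 3 : R) = 2 * (n + 1).choose 3 - n.choose 3 + n := by
  simp only [Nat.choose_succ_succ', Nat.choose_one_right, Nat.cast_add]
  ring

theorem mul_eq_closed_form_of_recurrence (huv : u ^ 2 + 1 = v) (hv : v ^ 2 = 0) {f : ℕ → R}
    (h0 : f 0 = 0) (h1 : f 1 = 1) (hrec : ∀ n, f (n + 2) = 2 * u * f (n + 1) + f n) (n : ℕ) :
    u * f n = u ^ n * (n - n.choose 3 * v) := by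
  suffices ∀ n, u * f n = u ^ n * (n - n.choose 3 * v) ∧
      u * f (n + 1) = u ^ (n + 1) * ((n + 1 : ℕ) - (n + 1).choose 3 * v) from (this n).1
  intro n
  induction n with
  | zero => simp [h0, h1, Nat.choose_eq_zero_of_lt]
  | succ n ih =>
    refine ⟨ih.2, ?_⟩
    rw [hrec, mul_add, mul_left_comm, ih.1, ih.2, cast_choose_three_add_two]
    push_cast
    linear_combination u ^ n * (n + (n - n.choose 3) * v) * huv + u ^ n * (n - n.choose 3) * hv

theorem pow_four_mul_eq_one (huv : u ^ 2 + 1 = v) (hv : v ^ 2 = 0) {p : ℕ}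
    (hpv : (p : R) * v = 0) : u ^ (4 * p) = 1 := by
  have hu4 : u ^ 4 = 1 + -2 * v := by linear_combination (u ^ 2 + v - 1) * huv + hv
  rw [pow_mul, hu4, one_add_pow_of_sq_eq_zero (by linear_combination 4 * hv)]
  linear_combination -2 * hpv

theorem eq_zero_and_succ_eq_one_of_pow_eq_one (huv : u ^ 2 + 1 = v) (hv : v ^ 2 = 0) {f : ℕ → R}
    (h0 : f 0 = 0) (h1 : f 1 = 1) (hrec : ∀ n, f (n + 2) = 2 * u * f (n + 1) + f n) {n : ℕ}
    (hn : (n : R) = 0) (hn2 : (n.choose 2 : R) = 0) (hn3 : (n.choose 3 : R) = 0)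
    (hun : u ^ n = 1) : f n = 0 ∧ f (n + 1) = 1 := by
  have hu : IsUnit u :=
    .of_mul_eq_one (-u * (1 + v)) (by linear_combination -(1 + v) * huv - hv)
  have hclosed := mul_eq_closed_form_of_recurrence huv hv h0 h1 hrec
  constructor
  · refine hu.mul_left_cancel ?_
    rw [hclosed, hn, hn3]; ring
  · refine hu.mul_left_cancel ?_
    rw [hclosed, Nat.choose_succ_succ', pow_succ, hun]; push_cast; rw [hn, hn2, hn3]; ring

end NilpotentBinet

theorem exists_half_sq_add_one_sq_eq_zero {p : ℕ} (hp : Odd p) {t b : ℤ}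
    (hpt : t ^ 2 + 4 = b ^ 2 * p) :
    ∃ u v : ZMod (p ^ 2),
      2 * u = t ∧ u ^ 2 + 1 = v ∧ v ^ 2 = 0 ∧ (p : ZMod (p ^ 2)) * v = 0 := by
  have hp2 : (p : ZMod (p ^ 2)) ^ 2 = 0 := by exact_mod_cast ZMod.natCast_self (p ^ 2)
  have hw : (2 : ZMod (p ^ 2)) * 2⁻¹ = 1 := by
    exact_mod_cast ZMod.coe_mul_inv_eq_one 2 (Nat.coprime_two_left.2 hp.pow)
  have hpt' : (t : ZMod (p ^ 2)) ^ 2 + 4 = (b : ZMod (p ^ 2)) ^ 2 * p := by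
    exact_mod_cast congrArg (Int.cast : ℤ → ZMod (p ^ 2)) hpt
  refine ⟨t * 2⁻¹, b ^ 2 * p * 2⁻¹ ^ 2, by linear_combination t * hw, ?_, ?_, ?_⟩
  · linear_combination (2⁻¹ : ZMod (p ^ 2)) ^ 2 * hpt' - (1 + 2 * 2⁻¹) * hw
  · linear_combination (b : ZMod (p ^ 2)) ^ 4 * 2⁻¹ ^ 4 * hp2
  · linear_combination (b : ZMod (p ^ 2)) ^ 2 * 2⁻¹ ^ 2 * hp2

theorem stmt_6_general (p : ℕ) (hp : p.Prime) (hp4 : p % 4 = 1)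
    (t b : ℤ)
    (hpt : t ^ 2 + 4 = b ^ 2 * (p : ℤ))
    (F : ℤ → ℤ) (hF0 : F 0 = 0) (hF1 : F 1 = 1)
    (hF : ∀ k : ℤ, F (k + 2) = t * F (k + 1) + F k) :
    ∀ m n : ℤ, m ≡ n [ZMOD (p : ℤ) ^ 2 * ((p : ℤ) - 1)] →
      F m ≡ F n [ZMOD (p : ℤ) ^ 2] := by
  intro m n hmn
  have hp3 : 3 < p := by have := hp.two_le; omega
  obtain ⟨k, hk⟩ : ∃ k, p - 1 = 4 * k := ⟨(p - 1) / 4, by omega⟩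
  obtain ⟨u, v, hut, huv, hv, hpv⟩ :=
    exists_half_sq_add_one_sq_eq_zero (hp.odd_of_ne_two (by omega)) hpt
  set P := p ^ 2 * (p - 1) with hP
  set G : ℤ → ZMod (p ^ 2) := fun k => F k
  have hGrec (k : ℤ) : G (k + 2) = t * G (k + 1) + G k := by simp [G, hF]
  have hchoose {q : ℕ} (hq : q.Prime) (hqp : q < p) : (P.choose q : ZMod (p ^ 2)) = 0 :=
    (ZMod.natCast_eq_zero_iff _ _).2 (Nat.dvd_choose_of_dvd_of_coprime
      (.pow_left 2 ((Nat.coprime_primes hp hq).2 hqp.ne')) (dvd_mul_right _ _))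
  have huP : u ^ P = 1 := by
    rw [hP, hk, show p ^ 2 * (4 * k) = 4 * p * (p * k) by ring, pow_mul,
      pow_four_mul_eq_one huv hv hpv, one_pow]
  obtain ⟨hGP, hGP1⟩ := eq_zero_and_succ_eq_one_of_pow_eq_one huv hv (f := fun n : ℕ => G n)
    (by simp [G, hF0]) (by simp [G, hF1]) (fun n => by push_cast; rw [hGrec, hut])
    ((ZMod.natCast_eq_zero_iff _ _).2 (dvd_mul_right _ _))
    (hchoose Nat.prime_two (by omega)) (hchoose Nat.prime_three hp3) huP
  have hper : Function.Periodic G P :=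
    periodic_of_two_term_recurrence hGrec (hGP.trans (by simp [G, hF0]))
      (by push_cast at hGP1; exact hGP1.trans (by simp [G, hF1]))
  obtain ⟨j, hj⟩ := hmn.dvd
  have hmn' : m + j * P = n := by push_cast [hP, Nat.cast_sub hp.one_le]; linarith
  have := hper.int_mul j m
  rw [Int.cast_id, hmn'] at this
  exact_mod_cast (ZMod.intCast_eq_intCast_iff (F m) (F n) (p ^ 2)).1 this.symm

theorem stmt_6 (p : ℕ) (hp : p.Prime) (hp4 : p % 4 = 1)
    (t b : ℤ) (ht : 0 < t) (hb : 0 < b)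
    (hpt : t ^ 2 + 4 = b ^ 2 * (p : ℤ))
    (F : ℤ → ℤ) (hF0 : F 0 = 0) (hF1 : F 1 = 1)
    (hF : ∀ k : ℤ, F (k + 2) = t * F (k + 1) + F k) :
    ∀ m n : ℤ, m ≡ n [ZMOD (p : ℤ) ^ 2 * ((p : ℤ) - 1)] →
      F m ≡ F n [ZMOD (p : ℤ) ^ 2] :=
  stmt_6_general p hp hp4 t b hpt F hF0 hF1 hF
end

section
/- Let p be a prime with p ≡ 1 (mod 4), t, b positive integers with t² + 4 = b²p, and 𝓕, 𝓛 the associated Lucas sequences. Then for every integer n ≥ 4: 2^{n−1}·𝓕_n ≡ n·t^{n−1} + C(n,3)·t^{n−3}·b²p (mod p²) and 2^{n−1}·𝓛_n ≡ t^n + C(n,2)·t^{n−2}·b²p (mod p²), where C(n,k) denotes the binomial coefficient. -/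
theorem stmt_8 (p : ℕ) (hp : p.Prime) (hp4 : p % 4 = 1)
    (t b : ℤ) (ht : 0 < t) (hb : 0 < b)
    (hpt : t ^ 2 + 4 = b ^ 2 * (p : ℤ))
    (F L : ℤ → ℤ) (hF0 : F 0 = 0) (hF1 : F 1 = 1)
    (hF : ∀ k : ℤ, F (k + 2) = t * F (k + 1) + F k)
    (hL0 : L 0 = 2) (hL1 : L 1 = t)
    (hL : ∀ k : ℤ, L (k + 2) = t * L (k + 1) + L k) :
    ∀ n : ℕ, 4 ≤ n →
      (2 : ℤ) ^ (n - 1) * F (n : ℤ)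
        ≡ (n : ℤ) * t ^ (n - 1) + (n.choose 3 : ℤ) * t ^ (n - 3) * b ^ 2 * (p : ℤ)
          [ZMOD (p : ℤ) ^ 2] ∧
      (2 : ℤ) ^ (n - 1) * L (n : ℤ)
        ≡ t ^ n + (n.choose 2 : ℤ) * t ^ (n - 2) * b ^ 2 * (p : ℤ)
          [ZMOD (p : ℤ) ^ 2] := by
  -- small values
  have hF2 : F 2 = t := by have h := hF 0; norm_num [hF0, hF1] at h; exact h
  have hF3 : F 3 = t ^ 2 + 1 := by
    have h := hF 1; norm_num [hF2, hF1] at h; linear_combination h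
  have hF4 : F 4 = t ^ 3 + 2 * t := by
    have h := hF 2; norm_num [hF3, hF2] at h; linear_combination h
  have hF5 : F 5 = t ^ 4 + 3 * t ^ 2 + 1 := by
    have h := hF 3; norm_num [hF4, hF3] at h; linear_combination h
  have hL2 : L 2 = t ^ 2 + 2 := by
    have h := hL 0; norm_num [hL0, hL1] at h; linear_combination h
  have hL3 : L 3 = t ^ 3 + 3 * t := by
    have h := hL 1; norm_num [hL2, hL1] at h; linear_combination h
  have hL4 : L 4 = t ^ 4 + 4 * t ^ 2 + 2 := by
    have h := hL 2; norm_num [hL3, hL2] at h; linear_combination h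
  have hL5 : L 5 = t ^ 5 + 5 * t ^ 3 + 5 * t := by
    have h := hL 3; norm_num [hL4, hL3] at h; linear_combination h
  have key : ∀ m : ℕ,
      ((p : ℤ) ^ 2 ∣ 2 ^ (m + 3) * F ((m : ℤ) + 4) -
        (((m : ℤ) + 4) * t ^ (m + 3) +
          (((m + 4).choose 3 : ℕ) : ℤ) * t ^ (m + 1) * (b ^ 2 * (p : ℤ)))) ∧
      ((p : ℤ) ^ 2 ∣ 2 ^ (m + 3) * L ((m : ℤ) + 4) -
        (t ^ (m + 4) +
          (((m + 4).choose 2 : ℕ) : ℤ) * t ^ (m + 2) * (b ^ 2 * (p : ℤ)))) := by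
    intro m
    induction m using Nat.twoStepInduction with
    | zero =>
      constructor
      · refine ⟨0, ?_⟩
        norm_num [hF4, Nat.choose]
        linear_combination 4 * t * hpt
      · refine ⟨b ^ 4, ?_⟩
        norm_num [hL4, Nat.choose]
        linear_combination (7 * t ^ 2 + 4 + b ^ 2 * (p : ℤ)) * hpt
    | one =>
      constructor
      · refine ⟨b ^ 4, ?_⟩
        norm_num [hF5, Nat.choose]
        linear_combination (11 * t ^ 2 + 4 + b ^ 2 * (p : ℤ)) * hpt
      · refine ⟨5 * t * b ^ 4, ?_⟩
        norm_num [hL5, Nat.choose]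
        linear_combination (15 * t ^ 3 + 20 * t + 5 * t * b ^ 2 * (p : ℤ)) * hpt
    | more m ih0 ih1 =>
      obtain ⟨⟨c0, hc0⟩, ⟨d0, hd0⟩⟩ := ih0
      obtain ⟨⟨c1, hc1⟩, ⟨d1, hd1⟩⟩ := ih1
      have hrecF : F ((m : ℤ) + 6) = t * F ((m : ℤ) + 5) + F ((m : ℤ) + 4) := by
        have h := hF ((m : ℤ) + 4); ring_nf at h ⊢; convert h using 3 <;> ring
      have hrecL : L ((m : ℤ) + 6) = t * L ((m : ℤ) + 5) + L ((m : ℤ) + 4) := by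
        have h := hL ((m : ℤ) + 4); ring_nf at h ⊢; convert h using 3 <;> ring
      have hn3 : (m + 6).choose 3 + (m + 4).choose 3 = 2 * (m + 5).choose 3 + (m + 4) := by
        simp [Nat.choose_succ_succ, Nat.choose_one_right]
        ring
      have hn2 : (m + 6).choose 2 + (m + 4).choose 2 = 2 * (m + 5).choose 2 + 1 := by
        simp [Nat.choose_succ_succ, Nat.choose_one_right]
        omega
      have hch3 : (((m + 6).choose 3 : ℕ) : ℤ) + (((m + 4).choose 3 : ℕ) : ℤ) =
          2 * (((m + 5).choose 3 : ℕ) : ℤ) + ((m : ℤ) + 4) := by exact_mod_cast hn3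
      have hch2 : (((m + 6).choose 2 : ℕ) : ℤ) + (((m + 4).choose 2 : ℕ) : ℤ) =
          2 * (((m + 5).choose 2 : ℕ) : ℤ) + 1 := by exact_mod_cast hn2
      constructor
      · refine ⟨2 * t * c1 + 4 * c0 + (((m + 4).choose 3 : ℕ) : ℤ) * t ^ (m + 1) * b ^ 4, ?_⟩
        push_cast
        have e1 : ((m : ℤ) + 2 + 4) = (m : ℤ) + 6 := by ring
        have e2 : ((m : ℤ) + 1 + 4) = (m : ℤ) + 5 := by ring
        rw [e1]
        push_cast at hc1
        rw [e2] at hc1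
        linear_combination 2 ^ (m + 5) * hrecF + 2 * t * hc1 + 4 * hc0 +
          (-(t ^ (m + 3) * b ^ 2 * (p : ℤ))) * hch3 +
          (((m : ℤ) + 4) * t ^ (m + 3) + (((m + 4).choose 3 : ℕ) : ℤ) * t ^ (m + 1) * b ^ 2 * (p : ℤ)) * hpt
      · refine ⟨2 * t * d1 + 4 * d0 + (((m + 4).choose 2 : ℕ) : ℤ) * t ^ (m + 2) * b ^ 4, ?_⟩
        push_cast
        have e1 : ((m : ℤ) + 2 + 4) = (m : ℤ) + 6 := by ring
        have e2 : ((m : ℤ) + 1 + 4) = (m : ℤ) + 5 := by ring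
        rw [e1]
        push_cast at hd1
        rw [e2] at hd1
        linear_combination 2 ^ (m + 5) * hrecL + 2 * t * hd1 + 4 * hd0 +
          (-(t ^ (m + 4) * b ^ 2 * (p : ℤ))) * hch2 +
          (t ^ (m + 4) + (((m + 4).choose 2 : ℕ) : ℤ) * t ^ (m + 2) * b ^ 2 * (p : ℤ)) * hpt
  intro n hn
  obtain ⟨m, rfl⟩ : ∃ m, n = m + 4 := ⟨n - 4, by omega⟩
  obtain ⟨hdF, hdL⟩ := key m
  have h1 : m + 4 - 1 = m + 3 := by omega
  have h3 : m + 4 - 3 = m + 1 := by omega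
  have h2 : m + 4 - 2 = m + 2 := by omega
  rw [h1, h3, h2]
  push_cast
  constructor
  · obtain ⟨c, hc⟩ := hdF
    exact Int.modEq_iff_dvd.mpr ⟨-c, by linear_combination -hc⟩
  · obtain ⟨c, hc⟩ := hdL
    exact Int.modEq_iff_dvd.mpr ⟨-c, by linear_combination -hc⟩
end

section
/- Let p be a prime with p ≡ 1 (mod 4), t, b positive integers with t² + 4 = b²p, and A, B integers with p = A² + B². Then exactly one of the two divisibilities p ∣ At + 2B and p ∣ At − 2B holds (at least one holds, and not both). -/
theorem stmt_9 (p : ℕ) (hp : p.Prime) (hp4 : p % 4 = 1)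
    (t b : ℤ) (ht : 0 < t) (hb : 0 < b)
    (hpt : t ^ 2 + 4 = b ^ 2 * (p : ℤ))
    (A B : ℤ) (hAB : (p : ℤ) = A ^ 2 + B ^ 2) :
    ((p : ℤ) ∣ A * t + 2 * B ∨ (p : ℤ) ∣ A * t - 2 * B) ∧
      ¬((p : ℤ) ∣ A * t + 2 * B ∧ (p : ℤ) ∣ A * t - 2 * B) := by
  have hpz : Prime (p : ℤ) := Nat.prime_iff_prime_int.mp hp
  have hp2 : p ≠ 2 := by omega
  have hp5 : 5 ≤ p := by
    have := hp.two_le; omega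
  have h1 : (p : ℤ) ∣ (A * t + 2 * B) * (A * t - 2 * B) := by
    have heq : (A * t + 2 * B) * (A * t - 2 * B)
        = A ^ 2 * (t ^ 2 + 4) - 4 * (A ^ 2 + B ^ 2) := by ring
    rw [heq, hpt, ← hAB]
    exact ⟨A ^ 2 * b ^ 2 - 4, by ring⟩
  refine ⟨hpz.dvd_mul.mp h1, ?_⟩
  rintro ⟨h2, h3⟩
  have hAt : (p : ℤ) ∣ 2 * (A * t) := by
    have := dvd_add h2 h3
    have he : A * t + 2 * B + (A * t - 2 * B) = 2 * (A * t) := by ring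
    rwa [he] at this
  have hnot2 : ¬ ((p : ℤ) ∣ 2) := by
    intro h
    have := Int.le_of_dvd (by norm_num) h
    have : (5 : ℤ) ≤ p := by exact_mod_cast hp5
    omega
  have hAt' : (p : ℤ) ∣ A * t := (hpz.dvd_mul.mp hAt).resolve_left hnot2
  rcases hpz.dvd_mul.mp hAt' with hA | ht'
  · -- p ∣ A, then p ∣ B, then p^2 ∣ p, contradiction
    have hB2 : (p : ℤ) ∣ B ^ 2 := by
      have : B ^ 2 = (A ^ 2 + B ^ 2) - A * A := by ring
      rw [this, ← hAB]
      exact dvd_sub (dvd_refl _) (hA.mul_right A)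
    have hB : (p : ℤ) ∣ B := hpz.dvd_of_dvd_pow hB2
    obtain ⟨a, ha⟩ := hA
    obtain ⟨c, hc⟩ := hB
    have hdvd : (p : ℤ) ^ 2 ∣ (p : ℤ) := by
      rw [ha, hc] at hAB
      refine ⟨a ^ 2 + c ^ 2, ?_⟩
      conv_lhs => rw [hAB]
      ring
    have hpp : (0 : ℤ) < p := by exact_mod_cast hp.pos
    have hle := Int.le_of_dvd hpp hdvd
    have h5 : (5 : ℤ) ≤ p := by exact_mod_cast hp5
    nlinarith
  · -- p ∣ t, then p ∣ 4
    have h4 : (p : ℤ) ∣ 4 := by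
      have : (4 : ℤ) = b ^ 2 * p - t * t := by rw [← hpt]; ring
      rw [this]
      exact dvd_sub (dvd_mul_left (p : ℤ) (b ^ 2)) (ht'.mul_right t)
    have := Int.le_of_dvd (by norm_num) h4
    have : (5 : ℤ) ≤ p := by exact_mod_cast hp5
    omega
end

section
/- Let p be a prime with p ≡ 1 (mod 4), t, b positive integers with t² + 4 = b²p and p ∤ b, and A, B integers with p = A² + B², A odd, and p ∣ At + 2B. Then there exist integers x₀ and y₀ such that 2p·x₀² = bp + (At + 2B), 2p·y₀² = bp − (At + 2B), and 2p·x₀·y₀ = Bt − 2A. -/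
/-! Put `u = (At + 2B)/p` and `v = (Bt - 2A)/p`, so that `p (u + iv) = (A + iB)(t - 2i)`.
Taking norms gives `u² + v² = b²`, and `Bu - Av = 2` shows `gcd(u, v) ∣ 2`. The claim says that
`u + iv = (x₀ + iy₀)²`, which the parametrization of primitive Pythagorean triples provides:
applied to `(u, v, b)` when `u` is odd, and to `(v/2, u/2, b/2)` when `u` is even. -/

namespace PythagoreanTriple

variable {x y z : ℤ}

theorem exists_two_mul_sq_of_coprime_of_odd (h : PythagoreanTriple x y z)
    (hc : Int.gcd x y = 1) (hx : x % 2 = 1) (hz : 0 < z) :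
    ∃ m n : ℤ, 2 * m ^ 2 = z + x ∧ 2 * n ^ 2 = z - x ∧ 2 * m * n = y := by
  obtain ⟨m, n, rfl, rfl, rfl, -⟩ := h.coprime_classification' hc hx hz
  exact ⟨m, n, by ring, by ring, by ring⟩

theorem exists_sq_of_coprime_of_odd (h : PythagoreanTriple x y z)
    (hc : Int.gcd x y = 1) (hx : x % 2 = 1) (hz : 0 < z) :
    ∃ m n : ℤ, m ^ 2 = z + y ∧ n ^ 2 = z - y ∧ m * n = x := by
  obtain ⟨m, n, rfl, rfl, rfl, -⟩ := h.coprime_classification' hc hx hz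
  exact ⟨m + n, m - n, by ring, by ring, by ring⟩

end PythagoreanTriple

section

variable {A B u v b : ℤ}

theorem exists_two_mul_sq_of_mul_sub_mul_eq_two_of_odd (hu : Odd u) (hb : 0 < b)
    (huv : u ^ 2 + v ^ 2 = b ^ 2) (hBA : B * u - A * v = 2) :
    ∃ x y : ℤ, 2 * x ^ 2 = b + u ∧ 2 * y ^ 2 = b - u ∧ 2 * x * y = v := by
  obtain ⟨k, hk⟩ := hu
  have hcop : Int.gcd u v = 1 := Int.isCoprime_iff_gcd_eq_one.mp
    ⟨1 - k * B, k * A, by linear_combination hk - k * hBA⟩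
  exact PythagoreanTriple.exists_two_mul_sq_of_coprime_of_odd
    (by unfold PythagoreanTriple; linear_combination huv) hcop (by omega) hb

theorem exists_two_mul_sq_of_mul_sub_mul_eq_two_of_even (hA : Odd A) (hB : Even B) (hu : Even u)
    (hb : 0 < b) (huv : u ^ 2 + v ^ 2 = b ^ 2) (hBA : B * u - A * v = 2) :
    ∃ x y : ℤ, 2 * x ^ 2 = b + u ∧ 2 * y ^ 2 = b - u ∧ 2 * x * y = v := by
  have hv : Even v := by
    have : Even (A * v) := by
      rw [show A * v = B * u - 2 by linarith]
      exact (hB.mul_right u).sub even_two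
    simpa [Int.even_mul, Int.not_even_iff_odd.mpr hA] using this
  obtain ⟨u', rfl⟩ := hu
  obtain ⟨v', rfl⟩ := hv
  obtain ⟨c, rfl⟩ : Even b := by
    have : Even (b ^ 2) := by
      rw [← huv]
      exact ⟨2 * u' ^ 2 + 2 * v' ^ 2, by ring⟩
    simpa [Int.even_pow] using this
  have hBA' : B * u' - A * v' = 1 := by linarith
  have hv' : Odd v' := by
    have : Odd (A * v') := by
      rw [show A * v' = B * u' - 1 by linarith]
      exact (hB.mul_right u').sub_odd odd_one
    exact Int.Odd.of_mul_right this
  have hcop : Int.gcd v' u' = 1 := Int.isCoprime_iff_gcd_eq_one.mp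
    ⟨-A, B, by linear_combination hBA'⟩
  have htriple : PythagoreanTriple v' u' c :=
    mul_left_cancel₀ four_ne_zero (by linear_combination huv)
  obtain ⟨m, n, hm, hn, hmn⟩ :=
    htriple.exists_sq_of_coprime_of_odd hcop (Int.odd_iff.mp hv') (by linarith)
  exact ⟨m, n, by linear_combination 2 * hm, by linear_combination 2 * hn,
    by linear_combination 2 * hmn⟩

theorem exists_two_mul_sq_of_mul_sub_mul_eq_two (hA : Odd A) (hB : Even B) (hb : 0 < b)
    (huv : u ^ 2 + v ^ 2 = b ^ 2) (hBA : B * u - A * v = 2) :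
    ∃ x y : ℤ, 2 * x ^ 2 = b + u ∧ 2 * y ^ 2 = b - u ∧ 2 * x * y = v := by
  rcases Int.even_or_odd u with hu | hu
  · exact exists_two_mul_sq_of_mul_sub_mul_eq_two_of_even hA hB hu hb huv hBA
  · exact exists_two_mul_sq_of_mul_sub_mul_eq_two_of_odd hu hb huv hBA

end

theorem Prime.not_dvd_of_eq_sq_add_sq {p A B : ℤ} (hp : Prime p) (hAB : p = A ^ 2 + B ^ 2) :
    ¬ p ∣ A := by
  intro hpA
  have hpB : p ∣ B := by
    refine hp.dvd_of_dvd_pow (n := 2) ((dvd_add_right (dvd_pow hpA two_ne_zero)).mp ?_)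
    rw [← hAB]
  have : p * p ∣ p * 1 := by
    rw [mul_one]
    nth_rewrite 3 [hAB]
    rw [sq, sq]
    exact dvd_add (mul_dvd_mul hpA hpA) (mul_dvd_mul hpB hpB)
  exact hp.not_dvd_one ((mul_dvd_mul_iff_left hp.ne_zero).mp this)

theorem Prime.dvd_mul_sub_of_dvd_mul_add {p A B t : ℤ} (hp : Prime p)
    (hAB : p = A ^ 2 + B ^ 2) (hdvd : p ∣ A * t + 2 * B) : p ∣ B * t - 2 * A := by
  have : p ∣ A * (B * t - 2 * A) := by
    rw [show A * (B * t - 2 * A) = B * (A * t + 2 * B) - 2 * p by rw [hAB]; ring]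
    exact dvd_sub (hdvd.mul_left B) (dvd_mul_left p 2)
  exact (hp.dvd_or_dvd this).resolve_left (hp.not_dvd_of_eq_sq_add_sq hAB)

theorem stmt_12_general (p : ℕ) (hp : p.Prime) (hp4 : p % 4 = 1)
    (t b : ℤ) (hb : 0 < b)
    (hpt : t ^ 2 + 4 = b ^ 2 * (p : ℤ))
    (A B : ℤ) (hAB : (p : ℤ) = A ^ 2 + B ^ 2) (hA : Odd A)
    (hdvd : (p : ℤ) ∣ A * t + 2 * B) :
    ∃ x₀ y₀ : ℤ, 2 * (p : ℤ) * x₀ ^ 2 = b * p + (A * t + 2 * B) ∧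
      2 * (p : ℤ) * y₀ ^ 2 = b * p - (A * t + 2 * B) ∧
      2 * (p : ℤ) * x₀ * y₀ = B * t - 2 * A := by
  have hpZ : Prime (p : ℤ) := Nat.prime_iff_prime_int.mp hp
  have hB : Even B := by
    have hpodd : Odd (A ^ 2 + B ^ 2) := by
      rw [← hAB]
      exact_mod_cast Nat.odd_iff.mpr (by omega)
    simpa [Int.odd_add, Int.even_pow, Int.odd_pow, hA] using hpodd
  obtain ⟨v, hv⟩ := hpZ.dvd_mul_sub_of_dvd_mul_add hAB hdvd
  obtain ⟨u, hu⟩ := hdvd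
  have huv : u ^ 2 + v ^ 2 = b ^ 2 := mul_left_cancel₀ (pow_ne_zero 2 hpZ.ne_zero) (by
    linear_combination -(p * u + A * t + 2 * B) * hu - (p * v + B * t - 2 * A) * hv
      - (t ^ 2 + 4) * hAB + p * hpt)
  have hBA : B * u - A * v = 2 := mul_left_cancel₀ hpZ.ne_zero (by
    linear_combination -B * hu + A * hv - 2 * hAB)
  obtain ⟨x, y, hx, hy, hxy⟩ := exists_two_mul_sq_of_mul_sub_mul_eq_two hA hB hb huv hBA
  exact ⟨x, y, by linear_combination p * hx - hu, by linear_combination p * hy + hu,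
    by linear_combination p * hxy - hv⟩

theorem stmt_12 (p : ℕ) (hp : p.Prime) (hp4 : p % 4 = 1)
    (t b : ℤ) (ht : 0 < t) (hb : 0 < b)
    (hpt : t ^ 2 + 4 = b ^ 2 * (p : ℤ)) (hpb : ¬(p : ℤ) ∣ b)
    (A B : ℤ) (hAB : (p : ℤ) = A ^ 2 + B ^ 2) (hA : Odd A)
    (hdvd : (p : ℤ) ∣ A * t + 2 * B) :
    ∃ x₀ y₀ : ℤ, 2 * (p : ℤ) * x₀ ^ 2 = b * p + (A * t + 2 * B) ∧
      2 * (p : ℤ) * y₀ ^ 2 = b * p - (A * t + 2 * B) ∧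
      2 * (p : ℤ) * x₀ * y₀ = B * t - 2 * A :=
  stmt_12_general p hp hp4 t b hb hpt A B hAB hA hdvd
end

section
/- Let p be a prime with p ≡ 1 (mod 4), t, b positive integers with t² + 4 = b²p, and 𝓕, 𝓛 the associated Lucas sequences. Let A, B, x₀, y₀ be integers satisfying 2p·x₀² = bp + (At + 2B), 2p·y₀² = bp − (At + 2B), and 2p·x₀·y₀ = Bt − 2A. Then for every integer n: bp·𝓕_{4n+1} − 𝓛_{4n+1}·A − 2B = 2p·(x₀𝓕_{2n} + y₀𝓕_{2n+1})² and bp·𝓕_{4n−1} + 𝓛_{4n−1}·A − 2B = 2p·(x₀𝓕_{2n} − y₀𝓕_{2n−1})². -/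
/-!
Both sides are quadratic forms in a pair of consecutive Lucas numbers. The addition formula
`𝓕_{m+k} = 𝓕_m 𝓕_{k+1} + 𝓕_{m-1} 𝓕_k` writes `𝓕_{2k+1}` and `𝓛_{2k+1}` as quadratic forms in
`(𝓕_{k+1}, 𝓕_k)`, and Cassini's identity `𝓕_{k+1}² - t 𝓕_k 𝓕_{k+1} - 𝓕_k² = (-1)^k` turns the
constant `2B` into one as well. With `k = 2n` and `k = 2n - 1` the claimed identities then
follow from the three relations between `A, B, x₀, y₀` by a linear combination.
-/

section LucasSequence

variable {R : Type*} [CommRing R] {t : R}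

def LucasRecurrence (t : R) (G : ℤ → R) : Prop :=
  ∀ k, G (k + 2) = t * G (k + 1) + G k

namespace LucasRecurrence

variable {G H : ℤ → R}

theorem ext (hG : LucasRecurrence t G) (hH : LucasRecurrence t H) (h0 : G 0 = H 0)
    (h1 : G 1 = H 1) : G = H := by
  suffices ∀ k : ℤ, G k = H k ∧ G (k + 1) = H (k + 1) from funext fun k => (this k).1
  intro k
  induction k using Int.induction_on with
  | zero => exact ⟨h0, by simpa using h1⟩
  | succ i ih =>
    refine ⟨ih.2, ?_⟩
    rw [add_assoc, one_add_one_eq_two, hG, hH, ih.1, ih.2]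
  | pred i ih =>
    have hGi := hG (-i - 1)
    have hHi := hH (-i - 1)
    rw [show -(i : ℤ) - 1 + 2 = -i + 1 by ring, show -(i : ℤ) - 1 + 1 = -i by ring] at hGi hHi
    rw [sub_add_cancel]
    exact ⟨by linear_combination ih.2 - t * ih.1 - hGi + hHi, ih.1⟩

theorem shift (hG : LucasRecurrence t G) (m : ℤ) : LucasRecurrence t (fun k => G (k + m)) :=
  fun k => by simpa only [add_right_comm _ m] using hG (k + m)

theorem linearCombination (hG : LucasRecurrence t G) (hH : LucasRecurrence t H) (a c : R) :
    LucasRecurrence t (fun k => a * G k + c * H k) :=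
  fun k => by simp only [hG k, hH k]; ring

theorem succ_eq (hG : LucasRecurrence t G) (k : ℤ) : G (k + 1) = t * G k + G (k - 1) := by
  have h := hG (k - 1)
  rwa [show k - 1 + 2 = k + 1 by ring, sub_add_cancel] at h

theorem cassini_succ (hG : LucasRecurrence t G) (k : ℤ) :
    G (k + 2) ^ 2 - t * G (k + 1) * G (k + 2) - G (k + 1) ^ 2
      = -(G (k + 1) ^ 2 - t * G k * G (k + 1) - G k ^ 2) := by
  linear_combination (G (k + 2) + G k) * hG k

end LucasRecurrence

variable {F L : ℤ → R}

theorem lucasF_add (hF0 : F 0 = 0) (hF1 : F 1 = 1) (hF : LucasRecurrence t F) (m k : ℤ) :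
    F (m + k) = F m * F (k + 1) + F (m - 1) * F k := by
  have hF2 : F 2 = t := by simpa [hF0, hF1] using hF 0
  have key := LucasRecurrence.ext (hF.shift m)
    (((hF.shift 1).linearCombination hF (F m) (F (m - 1))))
    (by simp [hF0, hF1]) (by simp [hF1, hF2, add_comm 1 m, hF.succ_eq m, mul_comm])
  simpa only [add_comm k m] using congrFun key k

theorem lucasL_eq_lucasF_succ_add_pred (hF0 : F 0 = 0) (hF1 : F 1 = 1)
    (hF : LucasRecurrence t F) (hL0 : L 0 = 2) (hL1 : L 1 = t) (hL : LucasRecurrence t L) (k : ℤ) :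
    L k = F (k + 1) + F (k - 1) := by
  have hFm1 : F (-1) = 1 := by simpa [hF0, hF1] using (hF.succ_eq 0).symm
  have hF2 : F 2 = t := by simpa [hF0, hF1] using hF 0
  have key := LucasRecurrence.ext hL ((hF.shift 1).linearCombination (hF.shift (-1)) 1 1)
    (by norm_num [hL0, hF1, hFm1]) (by norm_num [hL1, hF2, hF0])
  simpa only [one_mul, sub_eq_add_neg] using congrFun key k

theorem lucasF_cassini (hF0 : F 0 = 0) (hF1 : F 1 = 1) (hF : LucasRecurrence t F) (k : ℤ) :
    F (k + 1) ^ 2 - t * F k * F (k + 1) - F k ^ 2 = ((k.negOnePow : ℤ) : R) := by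
  induction k using Int.induction_on with
  | zero => simp [hF0, hF1]
  | succ i ih =>
    rw [Int.negOnePow_succ, add_assoc, one_add_one_eq_two, hF.cassini_succ, ih]
    push_cast; ring
  | pred i ih =>
    have h := hF.cassini_succ (-i - 1)
    rw [show -(i : ℤ) - 1 + 2 = -i + 1 by ring, sub_add_cancel, ih] at h
    rw [sub_add_cancel, Int.negOnePow_sub, Int.negOnePow_one]
    push_cast
    linear_combination h

theorem lucasF_two_mul_add_one (hF0 : F 0 = 0) (hF1 : F 1 = 1) (hF : LucasRecurrence t F)
    (k : ℤ) : F (2 * k + 1) = F (k + 1) ^ 2 + F k ^ 2 := by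
  rw [show 2 * k + 1 = (k + 1) + k by ring, lucasF_add hF0 hF1 hF, add_sub_cancel_right]
  ring

theorem lucasL_two_mul_add_one (hF0 : F 0 = 0) (hF1 : F 1 = 1) (hF : LucasRecurrence t F)
    (hL0 : L 0 = 2) (hL1 : L 1 = t) (hL : LucasRecurrence t L) (k : ℤ) :
    L (2 * k + 1) = t * (F (k + 1) ^ 2 - F k ^ 2) + 4 * F k * F (k + 1) := by
  rw [lucasL_eq_lucasF_succ_add_pred hF0 hF1 hF hL0 hL1 hL,
    show 2 * k + 1 + 1 = (k + 1) + (k + 1) by ring, show 2 * k + 1 - 1 = k + k by ring,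
    lucasF_add hF0 hF1 hF (k + 1) (k + 1),
    lucasF_add hF0 hF1 hF k k, add_sub_cancel_right, show k + 1 + 1 = k + 2 by ring]
  linear_combination F (k + 1) * hF k - F k * hF.succ_eq k

end LucasSequence

theorem stmt_13_general (p : ℕ)
    (t b : ℤ)
    (F L : ℤ → ℤ) (hF0 : F 0 = 0) (hF1 : F 1 = 1)
    (hF : ∀ k : ℤ, F (k + 2) = t * F (k + 1) + F k)
    (hL0 : L 0 = 2) (hL1 : L 1 = t)
    (hL : ∀ k : ℤ, L (k + 2) = t * L (k + 1) + L k)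
    (A B x₀ y₀ : ℤ)
    (hx : 2 * (p : ℤ) * x₀ ^ 2 = b * p + (A * t + 2 * B))
    (hy : 2 * (p : ℤ) * y₀ ^ 2 = b * p - (A * t + 2 * B))
    (hxy : 2 * (p : ℤ) * x₀ * y₀ = B * t - 2 * A) :
    ∀ n : ℤ,
      b * (p : ℤ) * F (4 * n + 1) - L (4 * n + 1) * A - 2 * B
        = 2 * (p : ℤ) * (x₀ * F (2 * n) + y₀ * F (2 * n + 1)) ^ 2 ∧
      b * (p : ℤ) * F (4 * n - 1) + L (4 * n - 1) * A - 2 * B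
        = 2 * (p : ℤ) * (x₀ * F (2 * n) - y₀ * F (2 * n - 1)) ^ 2 := by
  intro n
  have hFodd (k : ℤ) := lucasF_two_mul_add_one hF0 hF1 hF k
  have hLodd (k : ℤ) := lucasL_two_mul_add_one hF0 hF1 hF hL0 hL1 hL k
  rw [show 4 * n + 1 = 2 * (2 * n) + 1 by ring, hFodd (2 * n), hLodd (2 * n),
    show 4 * n - 1 = 2 * (2 * n - 1) + 1 by ring, hFodd (2 * n - 1), hLodd (2 * n - 1),
    sub_add_cancel]
  have hCeven := lucasF_cassini hF0 hF1 hF (2 * n)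
  have hCodd := lucasF_cassini hF0 hF1 hF (2 * n - 1)
  rw [Int.negOnePow_two_mul] at hCeven
  rw [sub_add_cancel, Int.negOnePow_sub, Int.negOnePow_two_mul, Int.negOnePow_one] at hCodd
  push_cast at hCeven hCodd
  constructor
  · linear_combination -F (2 * n) ^ 2 * hx - F (2 * n + 1) ^ 2 * hy
      - 2 * F (2 * n) * F (2 * n + 1) * hxy + 2 * B * hCeven
  · linear_combination -F (2 * n) ^ 2 * hx - F (2 * n - 1) ^ 2 * hy
      + 2 * F (2 * n) * F (2 * n - 1) * hxy - 2 * B * hCodd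

theorem stmt_13 (p : ℕ) (hp : p.Prime) (hp4 : p % 4 = 1)
    (t b : ℤ) (ht : 0 < t) (hb : 0 < b)
    (hpt : t ^ 2 + 4 = b ^ 2 * (p : ℤ))
    (F L : ℤ → ℤ) (hF0 : F 0 = 0) (hF1 : F 1 = 1)
    (hF : ∀ k : ℤ, F (k + 2) = t * F (k + 1) + F k)
    (hL0 : L 0 = 2) (hL1 : L 1 = t)
    (hL : ∀ k : ℤ, L (k + 2) = t * L (k + 1) + L k)
    (A B x₀ y₀ : ℤ)
    (hx : 2 * (p : ℤ) * x₀ ^ 2 = b * p + (A * t + 2 * B))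
    (hy : 2 * (p : ℤ) * y₀ ^ 2 = b * p - (A * t + 2 * B))
    (hxy : 2 * (p : ℤ) * x₀ * y₀ = B * t - 2 * A) :
    ∀ n : ℤ,
      b * (p : ℤ) * F (4 * n + 1) - L (4 * n + 1) * A - 2 * B
        = 2 * (p : ℤ) * (x₀ * F (2 * n) + y₀ * F (2 * n + 1)) ^ 2 ∧
      b * (p : ℤ) * F (4 * n - 1) + L (4 * n - 1) * A - 2 * B
        = 2 * (p : ℤ) * (x₀ * F (2 * n) - y₀ * F (2 * n - 1)) ^ 2 :=
  stmt_13_general p t b F L hF0 hF1 hF hL0 hL1 hL A B x₀ y₀ hx hy hxy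
end

section
/- Let p be a prime with p ≡ 1 (mod 4), t, b positive integers with t² + 4 = b²p, and 𝓕, 𝓛 the associated Lucas sequences. Let m and n be odd integers, and set T := 𝓛_n𝓛_m and N := 𝓕_m·b²p·(𝓛_m𝓕_n − 2𝓕_m) + 4. Then 4N = 𝓛_n²𝓛_m² − (𝓛_m𝓕_n − 2𝓕_m)²·b²p, and (N + 4)² − 4T² = 𝓛_m²·b²p·(𝓛_m𝓕_n − 2𝓕_m)². In particular (N + 4)² − 4T² lies in p·ℚ², i.e., it is p times the square of a rational number. -/
/-!
For odd `k` the Lucas pair satisfies the Pell-type relation `𝓛ₖ² - (t² + 4)𝓕ₖ² = -4`, i.e.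
`𝓛ₖ² - b²p𝓕ₖ² = -4`. Both claimed identities are polynomial consequences of this relation at
`k = m` and `k = n`, and the second exhibits `(N + 4)² - 4T²` as `p` times the square of
`𝓛_m b (𝓛_m𝓕_n - 2𝓕_m)`.

The relation itself comes from `𝓛ₖ = 2𝓕ₖ₊₁ - t𝓕ₖ`, which turns it into
`4(𝓕ₖ₊₁² - t𝓕ₖ₊₁𝓕ₖ - 𝓕ₖ²) = -4`, and from the Cassini-type fact that
`𝓕ₖ₊₁² - t𝓕ₖ₊₁𝓕ₖ - 𝓕ₖ²` changes sign at every step.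
-/

namespace LucasPair

variable {R : Type*} [CommRing R] (t : R)

def IsRec (u : ℤ → R) : Prop := ∀ k, u (k + 2) = t * u (k + 1) + u k

variable {t}

theorem IsRec.eq_zero {u : ℤ → R} (hu : IsRec t u) (h0 : u 0 = 0) (h1 : u 1 = 0) (k : ℤ) :
    u k = 0 := by
  suffices ∀ k, u k = 0 ∧ u (k + 1) = 0 from (this k).1
  intro k
  induction k using Int.induction_on with
  | zero => simpa using ⟨h0, h1⟩
  | succ k ih =>
    refine ⟨ih.2, ?_⟩
    rw [add_assoc, one_add_one_eq_two, hu, ih.1, ih.2, mul_zero, add_zero]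
  | pred k ih =>
    refine ⟨?_, by simpa using ih.1⟩
    have h := hu (-(k : ℤ) - 1)
    rw [show -(k : ℤ) - 1 + 2 = -k + 1 by ring, show -(k : ℤ) - 1 + 1 = -k by ring,
      ih.1, ih.2] at h
    linear_combination -h

variable {F L : ℤ → R}

theorem lucas_eq_two_mul_succ_sub_mul (hF : IsRec t F) (hF0 : F 0 = 0) (hF1 : F 1 = 1)
    (hL : IsRec t L) (hL0 : L 0 = 2) (hL1 : L 1 = t) (k : ℤ) : L k = 2 * F (k + 1) - t * F k := by
  have hdiff : IsRec t fun k ↦ L k - (2 * F (k + 1) - t * F k) := fun k ↦ by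
    simp only [show k + 2 + 1 = (k + 1) + 2 by ring, show k + 1 + 1 = k + 2 by ring, hL k,
      hF (k + 1), hF k]
    ring
  refine sub_eq_zero.mp (hdiff.eq_zero ?_ ?_ k)
  · simp [hL0, hF0, hF1]
  · have hF2 : F 2 = t := by simpa [hF0, hF1] using hF 0
    simp only [one_add_one_eq_two, hL1, hF2, hF1]
    ring

theorem cassini_antiperiodic (hF : IsRec t F) :
    Function.Antiperiodic (fun k ↦ F (k + 1) ^ 2 - t * F (k + 1) * F k - F k ^ 2) 1 := by
  intro k
  simp only [add_assoc, one_add_one_eq_two, hF k]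
  ring

theorem cassini_of_odd (hF : IsRec t F) (hF0 : F 0 = 0) (hF1 : F 1 = 1) {k : ℤ} (hk : Odd k) :
    F (k + 1) ^ 2 - t * F (k + 1) * F k - F k ^ 2 = -1 := by
  obtain ⟨j, rfl⟩ := hk
  have hF2 : F 2 = t := by simpa [hF0, hF1] using hF 0
  have h := ((cassini_antiperiodic hF).periodic_two_mul.int_mul j) 1
  simp only [Int.cast_id, mul_one, one_add_one_eq_two, hF2, hF1] at h
  rw [show 2 * j + 1 = 1 + j * 2 by ring, h]
  ring

theorem lucas_sq_sub_of_odd (hF : IsRec t F) (hF0 : F 0 = 0) (hF1 : F 1 = 1)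
    (hL : IsRec t L) (hL0 : L 0 = 2) (hL1 : L 1 = t) {k : ℤ} (hk : Odd k) :
    L k ^ 2 - (t ^ 2 + 4) * F k ^ 2 = -4 := by
  rw [lucas_eq_two_mul_succ_sub_mul hF hF0 hF1 hL hL0 hL1]
  linear_combination 4 * cassini_of_odd hF hF0 hF1 hk

end LucasPair

theorem stmt_14_general (p : ℕ)
    (t b : ℤ)
    (hpt : t ^ 2 + 4 = b ^ 2 * (p : ℤ))
    (F L : ℤ → ℤ) (hF0 : F 0 = 0) (hF1 : F 1 = 1)
    (hF : ∀ k : ℤ, F (k + 2) = t * F (k + 1) + F k)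
    (hL0 : L 0 = 2) (hL1 : L 1 = t)
    (hL : ∀ k : ℤ, L (k + 2) = t * L (k + 1) + L k)
    (m n : ℤ) (hm : Odd m) (hn : Odd n)
    (T N : ℤ) (hT : T = L n * L m)
    (hN : N = F m * b ^ 2 * (p : ℤ) * (L m * F n - 2 * F m) + 4) :
    4 * N = L n ^ 2 * L m ^ 2 - (L m * F n - 2 * F m) ^ 2 * b ^ 2 * (p : ℤ) ∧
    (N + 4) ^ 2 - 4 * T ^ 2 = L m ^ 2 * b ^ 2 * (p : ℤ) * (L m * F n - 2 * F m) ^ 2 ∧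
    ∃ r : ℚ, (((N + 4) ^ 2 - 4 * T ^ 2 : ℤ) : ℚ) = (p : ℚ) * r ^ 2 := by
  have hQm := LucasPair.lucas_sq_sub_of_odd hF hF0 hF1 hL hL0 hL1 hm
  have hQn := LucasPair.lucas_sq_sub_of_odd hF hF0 hF1 hL hL0 hL1 hn
  rw [hpt] at hQm hQn
  have hsq :
      (N + 4) ^ 2 - 4 * T ^ 2 = L m ^ 2 * b ^ 2 * (p : ℤ) * (L m * F n - 2 * F m) ^ 2 := by
    rw [hN, hT]
    linear_combination
      (16 - b ^ 2 * (p : ℤ) * (L m * F n - 2 * F m) ^ 2) * hQm - 4 * L m ^ 2 * hQn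
  refine ⟨by rw [hN]; linear_combination -L m ^ 2 * hQn + 4 * hQm, hsq,
    (L m * b * (L m * F n - 2 * F m) : ℤ), ?_⟩
  rw [hsq]
  push_cast
  ring

theorem stmt_14 (p : ℕ) (hp : p.Prime) (hp4 : p % 4 = 1)
    (t b : ℤ) (ht : 0 < t) (hb : 0 < b)
    (hpt : t ^ 2 + 4 = b ^ 2 * (p : ℤ))
    (F L : ℤ → ℤ) (hF0 : F 0 = 0) (hF1 : F 1 = 1)
    (hF : ∀ k : ℤ, F (k + 2) = t * F (k + 1) + F k)
    (hL0 : L 0 = 2) (hL1 : L 1 = t)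
    (hL : ∀ k : ℤ, L (k + 2) = t * L (k + 1) + L k)
    (m n : ℤ) (hm : Odd m) (hn : Odd n)
    (T N : ℤ) (hT : T = L n * L m)
    (hN : N = F m * b ^ 2 * (p : ℤ) * (L m * F n - 2 * F m) + 4) :
    4 * N = L n ^ 2 * L m ^ 2 - (L m * F n - 2 * F m) ^ 2 * b ^ 2 * (p : ℤ) ∧
    (N + 4) ^ 2 - 4 * T ^ 2 = L m ^ 2 * b ^ 2 * (p : ℤ) * (L m * F n - 2 * F m) ^ 2 ∧
    ∃ r : ℚ, (((N + 4) ^ 2 - 4 * T ^ 2 : ℤ) : ℚ) = (p : ℚ) * r ^ 2 :=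
  stmt_14_general p t b hpt F L hF0 hF1 hF hL0 hL1 hL m n hm hn T N hT hN
end

section
/- Let p be a prime with p ≡ 1 (mod 4), t, b positive integers with t² + 4 = b²p, 𝓕, 𝓛 the associated Lucas sequences, and m, n odd integers. Define the real numbers α = (𝓛_n𝓛_m + (𝓛_m𝓕_n − 2𝓕_m)·b·√p)/2 and α' = (𝓛_n𝓛_m − (𝓛_m𝓕_n − 2𝓕_m)·b·√p)/2. Then for every integer A: (α² − 4)(p + A√p) + (α'² − 4)(p − A√p) = (𝓕_n𝓛_m − 2𝓕_m)·b·p·𝓛_m·(bp𝓕_n + 𝓛_n·A), and likewise (α² − 4)(p − A√p) + (α'² − 4)(p + A√p) = (𝓕_n𝓛_m − 2𝓕_m)·b·p·𝓛_m·(bp𝓕_n − 𝓛_n·A). -/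
/-!
For odd `k` the Lucas identity `𝓛ₖ² - (t² + 4)𝓕ₖ² = 4(-1)ᵏ` reads `𝓛ₖ² - b²p𝓕ₖ² = -4`.
Writing `α, α' = (c ± E√p)/2` with `c = 𝓛ₙ𝓛ₘ` and `E = (𝓛ₘ𝓕ₙ - 2𝓕ₘ)b`, the left-hand sides
equal `p(α² + α'² - 8) ± A p c E`, and the norm equations for `k = n, m` give
`c² + E²p = 16 + 2Ep(b𝓛ₘ𝓕ₙ)`, which turns `α² + α'² - 8` into `E p b 𝓛ₘ 𝓕ₙ`.
-/

section LucasSequences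

variable {R : Type*} [CommRing R] {t : R}

theorem eq_of_linearRecurrence {x y : ℤ → R}
    (hx : ∀ k, x (k + 2) = t * x (k + 1) + x k) (hy : ∀ k, y (k + 2) = t * y (k + 1) + y k)
    (h0 : x 0 = y 0) (h1 : x 1 = y 1) : x = y := by
  have h : ∀ k, x k = y k ∧ x (k + 1) = y (k + 1) := by
    intro k
    induction k using Int.induction_on with
    | zero => exact ⟨h0, by simpa using h1⟩
    | succ k ih =>
      refine ⟨ih.2, ?_⟩
      rw [add_assoc, one_add_one_eq_two, hx, hy, ih.1, ih.2]
    | pred k ih =>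
      have ex := hx (-k - 1)
      have ey := hy (-k - 1)
      rw [show -(k : ℤ) - 1 + 2 = -k + 1 by ring, sub_add_cancel] at ex ey
      refine ⟨?_, by rw [sub_add_cancel]; exact ih.1⟩
      linear_combination ih.2 - t * ih.1 - ex + ey
  funext k
  exact (h k).1

variable {F L : ℤ → R}

theorem lucas_eq_two_mul_fib_succ_sub_mul_fib
    (hF : ∀ k, F (k + 2) = t * F (k + 1) + F k) (hF0 : F 0 = 0) (hF1 : F 1 = 1)
    (hL : ∀ k, L (k + 2) = t * L (k + 1) + L k) (hL0 : L 0 = 2) (hL1 : L 1 = t) (k : ℤ) :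
    L k = 2 * F (k + 1) - t * F k := by
  refine congrFun (eq_of_linearRecurrence (y := fun k => 2 * F (k + 1) - t * F k) hL
    (fun k => ?_) ?_ ?_) k
  · have h := hF (k + 1)
    rw [show k + 1 + 2 = k + 2 + 1 by ring] at h
    rw [show k + 1 + 1 = k + 2 by ring] at h ⊢
    linear_combination 2 * h - t * hF k
  · simp [hL0, hF0, hF1]
  · have hF2 := hF 0
    norm_num [hF0, hF1] at hF2
    norm_num [hL1, hF1, hF2]
    ring

theorem fib_cassini (hF : ∀ k, F (k + 2) = t * F (k + 1) + F k) (hF0 : F 0 = 0) (hF1 : F 1 = 1)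
    (k : ℤ) :
    F (k + 1) ^ 2 - t * F (k + 1) * F k - F k ^ 2 = k.negOnePow := by
  have step : ∀ k, F (k + 1 + 1) ^ 2 - t * F (k + 1 + 1) * F (k + 1) - F (k + 1) ^ 2
      = -(F (k + 1) ^ 2 - t * F (k + 1) * F k - F k ^ 2) := fun k => by
    rw [add_assoc, one_add_one_eq_two]
    linear_combination (F (k + 2) + F k) * hF k
  induction k using Int.induction_on with
  | zero => simp [hF0, hF1]
  | succ k ih => rw [step, ih, Int.negOnePow_succ, Units.val_neg, Int.cast_neg]
  | pred k ih =>
    have h := step (-k - 1)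
    rw [sub_add_cancel, ih, ← neg_eq_iff_eq_neg] at h
    rw [sub_add_cancel, ← h, Int.negOnePow_sub, Int.negOnePow_one]
    simp

theorem lucas_sq_sub_mul_fib_sq
    (hF : ∀ k, F (k + 2) = t * F (k + 1) + F k) (hF0 : F 0 = 0) (hF1 : F 1 = 1)
    (hL : ∀ k, L (k + 2) = t * L (k + 1) + L k) (hL0 : L 0 = 2) (hL1 : L 1 = t) (k : ℤ) :
    L k ^ 2 - (t ^ 2 + 4) * F k ^ 2 = 4 * k.negOnePow := by
  rw [lucas_eq_two_mul_fib_succ_sub_mul_fib hF hF0 hF1 hL hL0 hL1, ← fib_cassini hF hF0 hF1]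
  ring

end LucasSequences

theorem sq_add_sq_mul_eq_of_sq_sub_mul_sq_eq_neg_four {R : Type*} [CommRing R]
    {d x₁ y₁ x₂ y₂ : R}
    (h₁ : x₁ ^ 2 - d * y₁ ^ 2 = -4) (h₂ : x₂ ^ 2 - d * y₂ ^ 2 = -4) :
    (x₁ * x₂) ^ 2 + (x₂ * y₁ - 2 * y₂) ^ 2 * d
      = 16 + 2 * (x₂ * y₁ - 2 * y₂) * d * x₂ * y₁ := by
  linear_combination x₂ ^ 2 * h₁ - 4 * h₂

theorem trace_sq_sub_four_mul {P s c E X A α α' : ℝ} (hs : s ^ 2 = P)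
    (hα : α = (c + E * s) / 2) (hα' : α' = (c - E * s) / 2)
    (h : c ^ 2 + E ^ 2 * P = 16 + 2 * E * P * X) :
    (α ^ 2 - 4) * (P + A * s) + (α' ^ 2 - 4) * (P - A * s) = E * P * (P * X + A * c) := by
  subst hα hα'
  linear_combination (c * E * A + E ^ 2 * P / 2) * hs + P / 2 * h

theorem stmt_15_general (p : ℕ)
    (t b : ℤ)
    (hpt : t ^ 2 + 4 = b ^ 2 * (p : ℤ))
    (F L : ℤ → ℤ) (hF0 : F 0 = 0) (hF1 : F 1 = 1)
    (hF : ∀ k : ℤ, F (k + 2) = t * F (k + 1) + F k)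
    (hL0 : L 0 = 2) (hL1 : L 1 = t)
    (hL : ∀ k : ℤ, L (k + 2) = t * L (k + 1) + L k)
    (m n : ℤ) (hm : Odd m) (hn : Odd n)
    (α α' : ℝ)
    (hα : α = ((L n * L m : ℤ) + (L m * F n - 2 * F m : ℤ) * b * Real.sqrt p) / 2)
    (hα' : α' = ((L n * L m : ℤ) - (L m * F n - 2 * F m : ℤ) * b * Real.sqrt p) / 2) :
    ∀ A : ℤ,
      (α ^ 2 - 4) * ((p : ℝ) + (A : ℝ) * Real.sqrt p)
          + (α' ^ 2 - 4) * ((p : ℝ) - (A : ℝ) * Real.sqrt p)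
        = ((F n * L m - 2 * F m : ℤ) : ℝ) * b * p * (L m : ℝ)
            * ((b : ℝ) * p * (F n : ℝ) + (L n : ℝ) * A) ∧
      (α ^ 2 - 4) * ((p : ℝ) - (A : ℝ) * Real.sqrt p)
          + (α' ^ 2 - 4) * ((p : ℝ) + (A : ℝ) * Real.sqrt p)
        = ((F n * L m - 2 * F m : ℤ) : ℝ) * b * p * (L m : ℝ)
            * ((b : ℝ) * p * (F n : ℝ) - (L n : ℝ) * A) := by
  intro A
  have hnorm : ∀ k, Odd k → L k ^ 2 - b ^ 2 * p * F k ^ 2 = -4 := fun k hk => by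
    have h := lucas_sq_sub_mul_fib_sq hF hF0 hF1 hL hL0 hL1 k
    rw [hpt, Int.negOnePow_odd k hk, Units.val_neg, Units.val_one] at h
    linear_combination h
  have key := congrArg (Int.cast : ℤ → ℝ)
    (sq_add_sq_mul_eq_of_sq_sub_mul_sq_eq_neg_four (hnorm n hn) (hnorm m hm))
  push_cast at key
  have hs : Real.sqrt p ^ 2 = p := Real.sq_sqrt (Nat.cast_nonneg p)
  have trace (A' : ℝ) := trace_sq_sub_four_mul (A := A') (X := b * L m * F n) hs hα hα'
    (by push_cast; linear_combination key)
  push_cast at trace ⊢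
  exact ⟨by linear_combination trace A, by linear_combination trace (-A)⟩

theorem stmt_15 (p : ℕ) (hp : p.Prime) (hp4 : p % 4 = 1)
    (t b : ℤ) (ht : 0 < t) (hb : 0 < b)
    (hpt : t ^ 2 + 4 = b ^ 2 * (p : ℤ))
    (F L : ℤ → ℤ) (hF0 : F 0 = 0) (hF1 : F 1 = 1)
    (hF : ∀ k : ℤ, F (k + 2) = t * F (k + 1) + F k)
    (hL0 : L 0 = 2) (hL1 : L 1 = t)
    (hL : ∀ k : ℤ, L (k + 2) = t * L (k + 1) + L k)
    (m n : ℤ) (hm : Odd m) (hn : Odd n)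
    (α α' : ℝ)
    (hα : α = ((L n * L m : ℤ) + (L m * F n - 2 * F m : ℤ) * b * Real.sqrt p) / 2)
    (hα' : α' = ((L n * L m : ℤ) - (L m * F n - 2 * F m : ℤ) * b * Real.sqrt p) / 2) :
    ∀ A : ℤ,
      (α ^ 2 - 4) * ((p : ℝ) + (A : ℝ) * Real.sqrt p)
          + (α' ^ 2 - 4) * ((p : ℝ) - (A : ℝ) * Real.sqrt p)
        = ((F n * L m - 2 * F m : ℤ) : ℝ) * b * p * (L m : ℝ)
            * ((b : ℝ) * p * (F n : ℝ) + (L n : ℝ) * A) ∧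
      (α ^ 2 - 4) * ((p : ℝ) - (A : ℝ) * Real.sqrt p)
          + (α' ^ 2 - 4) * ((p : ℝ) + (A : ℝ) * Real.sqrt p)
        = ((F n * L m - 2 * F m : ℤ) : ℝ) * b * p * (L m : ℝ)
            * ((b : ℝ) * p * (F n : ℝ) - (L n : ℝ) * A) :=
  stmt_15_general p t b hpt F L hF0 hF1 hF hL0 hL1 hL m n hm hn α α' hα hα'
end

section
/- Let p be an odd prime and q a prime distinct from p, and suppose the multiplicative order of q modulo p equals 2r for some positive integer r (so q^r ≡ −1 (mod p)). Set f = 2r. Then the number of elements β ∈ 𝔽_{q^r} for which there exists a ∈ 𝔽_{q^f} with a² − βa + 1 = 0 and a not a p-th power in 𝔽_{q^f} equals (q^r + 1)(p − 1)/(2p). -/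
/-!
If `β ∈ 𝔽_{q^r}` and `a` is a root of `X² - βX + 1`, then so is `a^{q^r}`, hence
`a^{q^r} ∈ {a, a⁻¹}`. In the first case `a ∈ 𝔽_{q^r}ˣ`, a group of order `q^r - 1` prime to `p`,
so `a` is a `p`-th power. In the second case `a ∈ μ_{q^r+1}`, and since `𝔽_{q^f}ˣ` is cyclic of
order `(q^r - 1)(q^r + 1)` with `p ∣ q^r + 1`, such an `a` is a `p`-th power iff
`a^{(q^r+1)/p} = 1`. So the `β` in question are the values `a + a⁻¹` on
`μ_{q^r+1} \ μ_{(q^r+1)/p}`, a set of `(q^r + 1)(1 - 1/p)` elements on which `a ↦ a + a⁻¹` is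
exactly two-to-one, as `p` odd rules out `a = a⁻¹`.
-/

open Polynomial Finset

theorem IsCyclic.exists_pow_eq_iff_pow_card_div_eq_one {G : Type*} [CommGroup G] [IsCyclic G]
    [Finite G] {d : ℕ} (hd : d ∣ Nat.card G) (x : G) :
    (∃ y, y ^ d = x) ↔ x ^ (Nat.card G / d) = 1 := by
  have hle : (powMonoidHom d : G →* G).range ≤ (powMonoidHom (Nat.card G / d)).ker := by
    rintro _ ⟨y, rfl⟩
    simp [← pow_mul, Nat.mul_div_cancel' hd, pow_card_eq_one']
  have heq := Subgroup.eq_of_le_of_card_ge hle <| by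
    rw [IsCyclic.card_powMonoidHom_range, IsCyclic.card_powMonoidHom_ker,
      Nat.gcd_eq_right hd, Nat.gcd_eq_right (Nat.div_dvd_of_dvd hd)]
  simpa using SetLike.ext_iff.mp heq x

theorem exists_pow_eq_of_pow_eq_one_of_coprime {M : Type*} [Monoid M] {a : M} {m d : ℕ}
    (ha : a ^ m = 1) (hd : d.Coprime m) : ∃ c, c ^ d = a := by
  obtain ⟨k, hk⟩ := exists_pow_eq_self_of_coprime
    (hd.coprime_dvd_right (orderOf_dvd_of_pow_eq_one ha))
  exact ⟨a ^ k, by rw [← pow_mul, mul_comm, pow_mul, hk]⟩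

theorem pow_mul_eq_pow_of_sq_eq_one {M : Type*} [Monoid M] {a : M} (ha : a ^ 2 = 1) {p : ℕ}
    (hp : Odd p) (k : ℕ) : a ^ (k * p) = a ^ k := by
  obtain ⟨j, rfl⟩ := hp
  rw [mul_add, mul_one, pow_add, mul_comm, mul_assoc, pow_mul, ha, one_pow, one_mul]

theorem Polynomial.nthRootsFinset_one_subset_of_dvd {R : Type*} [CommRing R] [IsDomain R]
    [DecidableEq R] {d e : ℕ} (hd : 0 < d) (hed : e ∣ d) :
    nthRootsFinset e (1 : R) ⊆ nthRootsFinset d (1 : R) := by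
  intro x hx
  rw [mem_nthRootsFinset (Nat.pos_of_dvd_of_pos hed hd)] at hx
  obtain ⟨k, rfl⟩ := hed
  rw [mem_nthRootsFinset hd, pow_mul, hx, one_pow]

theorem Nat.coprime_sub_one_of_dvd_add_one {p n : ℕ} (hp : p.Prime) (hp2 : p ≠ 2)
    (h : p ∣ n + 1) : p.Coprime (n - 1) := by
  rw [hp.coprime_iff_not_dvd]
  intro h'
  have h2 : p ∣ 2 := by
    obtain _ | n := n
    · exact absurd (Nat.dvd_one.mp h) hp.ne_one
    · simpa [show n + 1 + 1 - n = 2 by omega] using Nat.dvd_sub h h'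
  exact hp2 ((Nat.prime_dvd_prime_iff_eq hp Nat.prime_two).mp h2)

theorem add_inv_eq_add_inv_iff {K : Type*} [Field K] {a x : K} (ha : a ≠ 0) (hx : x ≠ 0) :
    x + x⁻¹ = a + a⁻¹ ↔ x = a ∨ x = a⁻¹ := by
  constructor
  · intro h
    field_simp at h
    have : (x - a) * (x - a⁻¹) = 0 := by
      field_simp
      linear_combination h
    simpa [sub_eq_zero] using this
  · rintro (rfl | rfl) <;> simp [add_comm]

theorem sq_sub_mul_add_one_eq_zero_iff {K : Type*} [Field K] {a b : K} :
    a ^ 2 - b * a + 1 = 0 ↔ a ≠ 0 ∧ a + a⁻¹ = b := by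
  constructor
  · intro h
    have ha : a ≠ 0 := by rintro rfl; simp at h
    refine ⟨ha, ?_⟩
    field_simp
    linear_combination h
  · rintro ⟨ha, rfl⟩
    field_simp
    ring

theorem Finset.card_eq_two_mul_card_image_add_inv {K : Type*} [Field K] [DecidableEq K]
    {s : Finset K} (hinv : ∀ a ∈ s, a⁻¹ ∈ s) (hne : ∀ a ∈ s, a⁻¹ ≠ a) :
    #s = 2 * #(s.image fun a ↦ a + a⁻¹) := by
  have ne_zero : ∀ a ∈ s, a ≠ 0 := fun a ha h ↦ hne a ha (by simp [h])
  rw [card_eq_sum_card_image (fun a ↦ a + a⁻¹) s, sum_const_nat, mul_comm]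
  simp only [mem_image, forall_exists_index, and_imp]
  rintro _ a ha rfl
  have : {x ∈ s | x + x⁻¹ = a + a⁻¹} = {a, a⁻¹} := by
    ext x
    simp only [mem_filter, mem_insert, mem_singleton]
    constructor
    · rintro ⟨hx, h⟩
      exact (add_inv_eq_add_inv_iff (ne_zero a ha) (ne_zero x hx)).mp h
    · rintro (rfl | rfl)
      · exact ⟨ha, rfl⟩
      · exact ⟨hinv a ha, by simp [add_comm]⟩
  rw [this, card_pair (hne a ha).symm]

theorem Fintype.card_sub_one_of_card_eq_sq {K : Type*} [Fintype K] {m : ℕ}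
    (h : Fintype.card K = m ^ 2) : Fintype.card K - 1 = (m - 1) * (m + 1) := by
  rw [h, mul_comm, ← Nat.sq_sub_sq, one_pow]

theorem ZMod.dvd_pow_add_one_of_orderOf_eq_two_mul {p x r : ℕ} [Fact p.Prime] (hp2 : p ≠ 2)
    (hr : r ≠ 0) (h : orderOf (x : ZMod p) = 2 * r) : p ∣ x ^ r + 1 := by
  have h2 : orderOf ((x : ZMod p) ^ r) = 2 := by
    rw [orderOf_pow_of_dvd hr (h ▸ dvd_mul_left r 2), h,
      Nat.mul_div_cancel _ (Nat.pos_of_ne_zero hr)]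
  rw [CharP.orderOf_eq_two_iff p hp2] at h2
  rw [← ZMod.natCast_eq_zero_iff]
  push_cast
  rw [h2, neg_add_cancel]

namespace FiniteField

section

variable {K : Type*} [Field K] [Fintype K]

theorem exists_pow_eq_iff_pow_card_sub_one_div_eq_one {d : ℕ} (hd : d ∣ Fintype.card K - 1)
    {a : K} (ha : a ≠ 0) : (∃ c, c ^ d = a) ↔ a ^ ((Fintype.card K - 1) / d) = 1 := by
  rw [← Nat.card_eq_fintype_card, ← Nat.card_units] at hd ⊢
  have hd0 : d ≠ 0 := (Nat.pos_of_dvd_of_pos hd Nat.card_pos).ne'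
  have key := IsCyclic.exists_pow_eq_iff_pow_card_div_eq_one hd (Units.mk0 a ha)
  constructor
  · rintro ⟨c, rfl⟩
    have hc : c ≠ 0 := by rintro rfl; exact ha (zero_pow hd0)
    simpa [Units.ext_iff] using key.mp ⟨Units.mk0 c hc, Units.ext (by simp)⟩
  · intro h
    obtain ⟨u, hu⟩ := key.mpr (Units.ext (by simpa using h))
    exact ⟨u, by simpa [Units.ext_iff] using hu⟩

theorem card_nthRootsFinset_one_of_dvd [DecidableEq K] {d : ℕ} (hd : d ∣ Fintype.card K - 1) :
    #(nthRootsFinset d (1 : K)) = d := by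
  obtain ⟨g, hg⟩ := IsCyclic.exists_ofOrder_eq_natCard (α := Kˣ)
  rw [Nat.card_units, Nat.card_eq_fintype_card] at hg
  have hpos : 0 < Fintype.card K - 1 := Fintype.card_units (α := K) ▸ Fintype.card_pos
  have hζ : IsPrimitiveRoot (g : K) (Fintype.card K - 1) := by
    rw [← hg, ← orderOf_units]; exact IsPrimitiveRoot.orderOf _
  have hd0 : 0 < d := Nat.pos_of_dvd_of_pos hd hpos
  have := hζ.pow_of_dvd (Nat.div_pos (Nat.le_of_dvd hpos hd) hd0).ne' (Nat.div_dvd_of_dvd hd)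
  rw [Nat.div_div_self hd hpos.ne'] at this
  exact this.card_nthRootsFinset

theorem exists_pow_eq_iff_of_pow_add_one_eq_one {m p : ℕ} (hK : Fintype.card K = m ^ 2)
    (hpm : p ∣ m + 1) (hcop : p.Coprime (m - 1)) {a : K} (ha : a ^ (m + 1) = 1) :
    (∃ c, c ^ p = a) ↔ a ^ ((m + 1) / p) = 1 := by
  have ha0 : a ≠ 0 := by rintro rfl; simp at ha
  have hdvd : p ∣ Fintype.card K - 1 := by
    rw [Fintype.card_sub_one_of_card_eq_sq hK]; exact Dvd.dvd.mul_left hpm _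
  have hz : (a ^ ((m + 1) / p)) ^ p = 1 := by rw [← pow_mul, Nat.div_mul_cancel hpm, ha]
  rw [exists_pow_eq_iff_pow_card_sub_one_div_eq_one hdvd ha0,
    Fintype.card_sub_one_of_card_eq_sq hK, Nat.mul_div_assoc _ hpm, mul_comm, pow_mul,
    ← pow_eq_one_iff_of_coprime hcop (a := a ^ ((m + 1) / p)), and_iff_right hz]

end

section Frobenius

variable {F E : Type*} [Field F] [Fintype F] [Field E] [Algebra F E]

theorem add_inv_pow_card (a : E) :
    (a + a⁻¹) ^ Fintype.card F = a ^ Fintype.card F + (a ^ Fintype.card F)⁻¹ := by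
  change frobeniusAlgHom F E (a + a⁻¹) = _
  rw [map_add, map_inv₀]
  rfl

variable [Finite E]

theorem mem_range_algebraMap_iff_pow_card_eq_self {x : E} :
    x ∈ Set.range (algebraMap F E) ↔ x ^ Fintype.card F = x := by
  constructor
  · rintro ⟨b, rfl⟩
    rw [← map_pow, pow_card]
  · intro hx
    refine (IsGalois.mem_range_algebraMap_iff_fixed x).mpr fun σ ↦ ?_
    obtain ⟨i, rfl⟩ := (bijective_frobeniusAlgEquivOfAlgebraic_pow F E).2 σ
    rw [AlgEquiv.coe_pow]
    exact Function.iterate_fixed hx _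

theorem pow_card_eq_self_or_eq_inv {a : E} (ha : a ≠ 0)
    (h : a + a⁻¹ ∈ Set.range (algebraMap F E)) :
    a ^ Fintype.card F = a ∨ a ^ Fintype.card F = a⁻¹ := by
  rw [mem_range_algebraMap_iff_pow_card_eq_self, add_inv_pow_card] at h
  exact (add_inv_eq_add_inv_iff ha (pow_ne_zero _ ha)).mp h

end Frobenius

section QuadraticExtension

variable {F E : Type*} [Field F] [Fintype F] [Field E] [Fintype E] [Algebra F E] {p : ℕ}

local notation "n" => Fintype.card F

theorem image_algebraMap_setOf_exists_root_not_pow (hE : Fintype.card E = n ^ 2)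
    (hpN : p ∣ n + 1) (hcop : p.Coprime (n - 1)) :
    algebraMap F E ''
        {β | ∃ a : E, a ^ 2 - algebraMap F E β * a + 1 = 0 ∧ ¬∃ c : E, c ^ p = a} =
      (fun a ↦ a + a⁻¹) '' {a | a ^ (n + 1) = 1 ∧ a ^ ((n + 1) / p) ≠ 1} := by
  ext x
  simp only [Set.mem_image, Set.mem_ofPred_eq]
  constructor
  · rintro ⟨β, ⟨a, hroot, hnot⟩, rfl⟩
    obtain ⟨ha0, hβ⟩ := sq_sub_mul_add_one_eq_zero_iff.mp hroot
    rcases pow_card_eq_self_or_eq_inv ha0 ⟨β, hβ.symm⟩ with hfix | hconj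
    · refine absurd (exists_pow_eq_of_pow_eq_one_of_coprime (m := n - 1) ?_ hcop) hnot
      refine mul_right_cancel₀ ha0 ?_
      rw [← pow_succ, Nat.sub_add_cancel Fintype.card_pos, hfix, one_mul]
    · have hN : a ^ (n + 1) = 1 := by rw [pow_succ, hconj, inv_mul_cancel₀ ha0]
      have hNp := mt (exists_pow_eq_iff_of_pow_add_one_eq_one hE hpN hcop hN).mpr hnot
      exact ⟨a, ⟨hN, hNp⟩, hβ⟩
  · rintro ⟨a, ⟨hN, hnot⟩, rfl⟩
    have ha0 : a ≠ 0 := by rintro rfl; simp at hN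
    have hconj : a ^ n = a⁻¹ := eq_inv_of_mul_eq_one_left (by rw [← pow_succ, hN])
    obtain ⟨β, hβ⟩ : a + a⁻¹ ∈ Set.range (algebraMap F E) := by
      rw [mem_range_algebraMap_iff_pow_card_eq_self, add_inv_pow_card, hconj, inv_inv, add_comm]
    refine ⟨β, ⟨a, sq_sub_mul_add_one_eq_zero_iff.mpr ⟨ha0, hβ.symm⟩, ?_⟩, hβ⟩
    exact mt (exists_pow_eq_iff_of_pow_add_one_eq_one hE hpN hcop hN).mp hnot

theorem two_mul_mul_card_setOf_exists_root_not_pow (hE : Fintype.card E = n ^ 2)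
    (hp : p.Prime) (hp2 : p ≠ 2) (hpN : p ∣ n + 1) :
    2 * p * Nat.card {β : F | ∃ a : E,
        a ^ 2 - algebraMap F E β * a + 1 = 0 ∧ ¬∃ c : E, c ^ p = a} = (n + 1) * (p - 1) := by
  classical
  have hcop := Nat.coprime_sub_one_of_dvd_add_one hp hp2 hpN
  have hpos : 0 < (n + 1) / p :=
    Nat.div_pos (Nat.le_of_dvd (Nat.add_one_pos _) hpN) hp.pos
  set A := nthRootsFinset (n + 1) (1 : E) \ nthRootsFinset ((n + 1) / p) (1 : E)
  have hmem (a : E) : a ∈ A ↔ a ^ (n + 1) = 1 ∧ a ^ ((n + 1) / p) ≠ 1 := by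
    simp only [A, mem_sdiff, mem_nthRootsFinset (Nat.add_one_pos _), mem_nthRootsFinset hpos]
  have hA : (A : Set E) = {a | a ^ (n + 1) = 1 ∧ a ^ ((n + 1) / p) ≠ 1} := Set.ext hmem
  have hdvd : n + 1 ∣ Fintype.card E - 1 :=
    Fintype.card_sub_one_of_card_eq_sq hE ▸ dvd_mul_left _ _
  have hcardA : #A = (n + 1) - (n + 1) / p := by
    rw [card_sdiff_of_subset (nthRootsFinset_one_subset_of_dvd (Nat.add_one_pos _)
        (Nat.div_dvd_of_dvd hpN)), card_nthRootsFinset_one_of_dvd hdvd,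
      card_nthRootsFinset_one_of_dvd ((Nat.div_dvd_of_dvd hpN).trans hdvd)]
  have hinv : ∀ a ∈ A, a⁻¹ ∈ A := by
    intro a ha
    simpa [hmem, inv_pow] using ha
  have hne : ∀ a ∈ A, a⁻¹ ≠ a := by
    intro a ha h
    obtain ⟨hN, hNp⟩ := (hmem a).mp ha
    have ha0 : a ≠ 0 := by rintro rfl; simp at hN
    have hsq : a ^ 2 = 1 := by rw [sq]; nth_rewrite 1 [← h]; exact inv_mul_cancel₀ ha0
    rw [← pow_mul_eq_pow_of_sq_eq_one hsq (hp.odd_of_ne_two hp2), Nat.div_mul_cancel hpN] at hNp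
    exact hNp hN
  rw [← Nat.card_image_of_injective (algebraMap F E).injective,
    image_algebraMap_setOf_exists_root_not_pow hE hpN hcop, ← hA, ← coe_image,
    Nat.card_coe_set_eq, Set.ncard_coe_finset]
  calc 2 * p * #(A.image fun a ↦ a + a⁻¹) = p * #A := by
        rw [card_eq_two_mul_card_image_add_inv hinv hne]; ring
    _ = (n + 1) * (p - 1) := by
        rw [hcardA, Nat.mul_sub, Nat.mul_div_cancel' hpN, Nat.mul_sub_one, mul_comm]

end QuadraticExtension

end FiniteField

theorem stmt_19_general (p q r : ℕ) (hp : p.Prime) (hpodd : p ≠ 2)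
    (hr : 0 < r)
    (horder : orderOf ((q : ℕ) : ZMod p) = 2 * r)
    (F E : Type) [Field F] [Field E] [Fintype F] [Fintype E] [Algebra F E]
    (hcardF : Fintype.card F = q ^ r) (hcardE : Fintype.card E = q ^ (2 * r)) :
    2 * p * Nat.card {β : F | ∃ a : E,
        a ^ 2 - algebraMap F E β * a + 1 = 0 ∧ ¬∃ c : E, c ^ p = a}
      = (q ^ r + 1) * (p - 1) := by
  have := Fact.mk hp
  have hpN : p ∣ Fintype.card F + 1 :=
    hcardF ▸ ZMod.dvd_pow_add_one_of_orderOf_eq_two_mul hpodd hr.ne' horder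
  have hE : Fintype.card E = Fintype.card F ^ 2 := by rw [hcardE, hcardF, pow_mul']
  rw [← hcardF]
  exact FiniteField.two_mul_mul_card_setOf_exists_root_not_pow hE hp hpodd hpN

theorem stmt_19 (p q r : ℕ) (hp : p.Prime) (hpodd : p ≠ 2)
    (hq : q.Prime) (hqp : q ≠ p) (hr : 0 < r)
    (horder : orderOf ((q : ℕ) : ZMod p) = 2 * r)
    (F E : Type) [Field F] [Field E] [Fintype F] [Fintype E] [Algebra F E]
    (hcardF : Fintype.card F = q ^ r) (hcardE : Fintype.card E = q ^ (2 * r)) :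
    2 * p * Nat.card {β : F | ∃ a : E,
        a ^ 2 - algebraMap F E β * a + 1 = 0 ∧ ¬∃ c : E, c ^ p = a}
      = (q ^ r + 1) * (p - 1) :=
  stmt_19_general p q r hp hpodd hr horder F E hcardF hcardE
end
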